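/- For every g ∈ SO₄(ℂ), the induced map ⋀²g on the second exterior power maps the subspace V₋ into itself. -/

import Mathlib

/- STATEMENT 3: For every g ∈ SO₄(ℂ), the induced map ⋀²g on the second exterior
power maps the subspace V₋ into itself. -/

noncomputable section

open ExteriorAlgebra Matrix

/-- The antidiagonal matrix `J₄`. -/
def J4 : Matrix (Fin 4) (Fin 4) ℂ := !![0,0,0,1; 0,0,1,0; 0,1,0,0; 1,0,0,0]

/-- The standard basis of `ℂ⁴`. -/
def e (i : Fin 4) : Fin 4 → ℂ := Pi.single i 1

/-- The wedge product `v ∧ w`, as an element of the second exterior power `⋀²ℂ⁴`. -/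
def wedge (v w : Fin 4 → ℂ) : ⋀[ℂ]^2 (Fin 4 → ℂ) :=
  ⟨ιMulti ℂ 2 ![v, w], ιMulti_range ℂ 2 (Set.mem_range_self _)⟩

/-- `V₋` is the span of `{e₁∧e₂, e₁∧e₄ − e₃∧e₂, e₃∧e₄}` in `⋀²ℂ⁴`. -/
def Vminus : Submodule ℂ (⋀[ℂ]^2 (Fin 4 → ℂ)) :=
  Submodule.span ℂ {wedge (e 0) (e 1), wedge (e 0) (e 3) - wedge (e 2) (e 1), wedge (e 2) (e 3)}


lemma wedge_val (v w : Fin 4 → ℂ) :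
    (wedge v w : ExteriorAlgebra ℂ (Fin 4 → ℂ)) = ExteriorAlgebra.ι ℂ v * ExteriorAlgebra.ι ℂ w := by
  show ιMulti ℂ 2 ![v, w] = _
  rw [ιMulti_apply]
  simp

lemma wedge_add_left (u v w : Fin 4 → ℂ) : wedge (u + v) w = wedge u w + wedge v w := by
  apply Subtype.ext
  simp [wedge_val, add_mul]

lemma wedge_smul_left (a : ℂ) (u w : Fin 4 → ℂ) : wedge (a • u) w = a • wedge u w := by
  apply Subtype.ext
  simp [wedge_val, smul_mul_assoc]

lemma wedge_add_right (u v w : Fin 4 → ℂ) : wedge u (v + w) = wedge u v + wedge u w := by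
  apply Subtype.ext
  simp [wedge_val, mul_add]

lemma wedge_smul_right (a : ℂ) (u w : Fin 4 → ℂ) : wedge u (a • w) = a • wedge u w := by
  apply Subtype.ext
  simp [wedge_val, mul_smul_comm]

lemma wedge_self (u : Fin 4 → ℂ) : wedge u u = 0 := by
  apply Subtype.ext
  simp [wedge_val, ι_sq_zero]

lemma wedge_antisymm (u v : Fin 4 → ℂ) : wedge u v = - wedge v u := by
  apply Subtype.ext
  have h := ι_add_mul_swap (R := ℂ) u v
  simp only [Submodule.coe_neg, wedge_val]
  exact eq_neg_of_add_eq_zero_left h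

lemma decomp (u : Fin 4 → ℂ) : u = u 0 • e 0 + u 1 • e 1 + u 2 • e 2 + u 3 • e 3 := by
  funext k
  fin_cases k <;> simp [e, Pi.single_apply]

lemma wedge_expand (u v : Fin 4 → ℂ) : wedge u v =
    (u 0 * v 1 - u 1 * v 0) • wedge (e 0) (e 1)
    + (u 0 * v 2 - u 2 * v 0) • wedge (e 0) (e 2)
    + (u 0 * v 3 - u 3 * v 0) • wedge (e 0) (e 3)
    + (u 1 * v 2 - u 2 * v 1) • wedge (e 1) (e 2)
    + (u 1 * v 3 - u 3 * v 1) • wedge (e 1) (e 3)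
    + (u 2 * v 3 - u 3 * v 2) • wedge (e 2) (e 3) := by
  conv_lhs => rw [decomp u, decomp v]
  simp only [wedge_add_left, wedge_add_right, wedge_smul_left, wedge_smul_right,
    wedge_self, smul_zero, add_zero, zero_add, smul_smul, smul_add,
    wedge_antisymm (e 1) (e 0), wedge_antisymm (e 2) (e 0), wedge_antisymm (e 3) (e 0),
    wedge_antisymm (e 2) (e 1), wedge_antisymm (e 3) (e 1), wedge_antisymm (e 3) (e 2)]
  module

lemma det_four (M : Matrix (Fin 4) (Fin 4) ℂ) : M.det =
    M 0 0 * (M 1 1 * (M 2 2 * M 3 3 - M 2 3 * M 3 2) - M 1 2 * (M 2 1 * M 3 3 - M 2 3 * M 3 1)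
      + M 1 3 * (M 2 1 * M 3 2 - M 2 2 * M 3 1))
    - M 0 1 * (M 1 0 * (M 2 2 * M 3 3 - M 2 3 * M 3 2) - M 1 2 * (M 2 0 * M 3 3 - M 2 3 * M 3 0)
      + M 1 3 * (M 2 0 * M 3 2 - M 2 2 * M 3 0))
    + M 0 2 * (M 1 0 * (M 2 1 * M 3 3 - M 2 3 * M 3 1) - M 1 1 * (M 2 0 * M 3 3 - M 2 3 * M 3 0)
      + M 1 3 * (M 2 0 * M 3 1 - M 2 1 * M 3 0))
    - M 0 3 * (M 1 0 * (M 2 1 * M 3 2 - M 2 2 * M 3 1) - M 1 1 * (M 2 0 * M 3 2 - M 2 2 * M 3 0)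
      + M 1 2 * (M 2 0 * M 3 1 - M 2 1 * M 3 0)) := by
  rw [Matrix.det_succ_row_zero]
  norm_num [Fin.sum_univ_succ, Matrix.det_fin_three, Matrix.submatrix,
    show (Fin.succ 2 : Fin 4) = 3 by decide, show Fin.succAbove (2 : Fin 4) 2 = 3 by decide,
    show Fin.succAbove (1 : Fin 4) 2 = 3 by decide, show Fin.succAbove (3 : Fin 4) 2 = 2 by decide,
    show (Fin.castSucc 2 : Fin 4) = 2 by decide]
  ring

lemma mem_Vminus_of_comb (A B C : ℂ) :
    A • wedge (e 0) (e 1) + B • (wedge (e 0) (e 3) - wedge (e 2) (e 1))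
      + C • wedge (e 2) (e 3) ∈ Vminus := by
  refine Submodule.add_mem _ (Submodule.add_mem _ ?_ ?_) ?_
  · exact Submodule.smul_mem _ _ (Submodule.subset_span (Set.mem_insert _ _))
  · exact Submodule.smul_mem _ _ (Submodule.subset_span
      (Set.mem_insert_of_mem _ (Set.mem_insert _ _)))
  · exact Submodule.smul_mem _ _ (Submodule.subset_span
      (Set.mem_insert_of_mem _ (Set.mem_insert_of_mem _ rfl)))

set_option maxHeartbeats 1000000 in
theorem exterior_square_preserves_Vminus
    (g : Matrix (Fin 4) (Fin 4) ℂ)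
    (horth : gᵀ * J4 * g = J4) (hdet : g.det = 1)
    (Λ : (⋀[ℂ]^2 (Fin 4 → ℂ)) →ₗ[ℂ] (⋀[ℂ]^2 (Fin 4 → ℂ)))
    (hΛ : ∀ v w : Fin 4 → ℂ, Λ (wedge v w) = wedge (g.mulVec v) (g.mulVec w)) :
    ∀ x ∈ Vminus, Λ x ∈ Vminus := by
  -- matrix-level consequences
  have hJ : J4 * J4 = 1 := by
    ext i j
    fin_cases i <;> fin_cases j <;>
      norm_num [Matrix.mul_apply, Fin.sum_univ_four, J4, Matrix.vecMul, dotProduct,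
    Matrix.vecHead, Matrix.vecTail, Function.comp, Matrix.cons_val_two, Matrix.cons_val_three, Matrix.one_apply, Fin.ext_iff]
  have hinv : g⁻¹ = J4 * gᵀ * J4 := by
    apply Matrix.inv_eq_left_inv
    calc J4 * gᵀ * J4 * g = J4 * (gᵀ * J4 * g) := by noncomm_ring
    _ = 1 := by rw [horth, hJ]
  have hadj : g.adjugate = J4 * gᵀ * J4 := by
    have h := hinv
    rw [Matrix.inv_def, hdet] at h
    simpa using h
  have r00 := congrFun (congrFun horth 0) 0
  norm_num [Matrix.mul_apply, Fin.sum_univ_four, J4, Matrix.vecMul, dotProduct,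
    Matrix.vecHead, Matrix.vecTail, Function.comp, Matrix.cons_val_two, Matrix.cons_val_three] at r00
  have r01 := congrFun (congrFun horth 0) 1
  norm_num [Matrix.mul_apply, Fin.sum_univ_four, J4, Matrix.vecMul, dotProduct,
    Matrix.vecHead, Matrix.vecTail, Function.comp, Matrix.cons_val_two, Matrix.cons_val_three] at r01
  have r02 := congrFun (congrFun horth 0) 2
  norm_num [Matrix.mul_apply, Fin.sum_univ_four, J4, Matrix.vecMul, dotProduct,
    Matrix.vecHead, Matrix.vecTail, Function.comp, Matrix.cons_val_two, Matrix.cons_val_three] at r02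
  have r03 := congrFun (congrFun horth 0) 3
  norm_num [Matrix.mul_apply, Fin.sum_univ_four, J4, Matrix.vecMul, dotProduct,
    Matrix.vecHead, Matrix.vecTail, Function.comp, Matrix.cons_val_two, Matrix.cons_val_three] at r03
  have r12 := congrFun (congrFun horth 1) 2
  norm_num [Matrix.mul_apply, Fin.sum_univ_four, J4, Matrix.vecMul, dotProduct,
    Matrix.vecHead, Matrix.vecTail, Function.comp, Matrix.cons_val_two, Matrix.cons_val_three] at r12
  have r13 := congrFun (congrFun horth 1) 3
  norm_num [Matrix.mul_apply, Fin.sum_univ_four, J4, Matrix.vecMul, dotProduct,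
    Matrix.vecHead, Matrix.vecTail, Function.comp, Matrix.cons_val_two, Matrix.cons_val_three] at r13
  have r22 := congrFun (congrFun horth 2) 2
  norm_num [Matrix.mul_apply, Fin.sum_univ_four, J4, Matrix.vecMul, dotProduct,
    Matrix.vecHead, Matrix.vecTail, Function.comp, Matrix.cons_val_two, Matrix.cons_val_three] at r22
  have r23 := congrFun (congrFun horth 2) 3
  norm_num [Matrix.mul_apply, Fin.sum_univ_four, J4, Matrix.vecMul, dotProduct,
    Matrix.vecHead, Matrix.vecTail, Function.comp, Matrix.cons_val_two, Matrix.cons_val_three] at r23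
  have s00 := congrFun (congrFun hadj 0) 0
  rw [Matrix.adjugate_apply, det_four] at s00
  simp only [Matrix.updateRow_apply, Pi.single_apply] at s00
  norm_num [Matrix.mul_apply, Fin.sum_univ_four, J4, Matrix.vecMul, dotProduct,
    Matrix.vecHead, Matrix.vecTail, Function.comp, Matrix.cons_val_two, Matrix.cons_val_three,
    show (0:Fin 4) ≠ 1 by decide, show (0:Fin 4) ≠ 2 by decide, show (0:Fin 4) ≠ 3 by decide,
    show (1:Fin 4) ≠ 0 by decide, show (1:Fin 4) ≠ 2 by decide, show (1:Fin 4) ≠ 3 by decide,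
    show (2:Fin 4) ≠ 0 by decide, show (2:Fin 4) ≠ 1 by decide, show (2:Fin 4) ≠ 3 by decide,
    show (3:Fin 4) ≠ 0 by decide, show (3:Fin 4) ≠ 1 by decide, show (3:Fin 4) ≠ 2 by decide] at s00
  have s01 := congrFun (congrFun hadj 0) 1
  rw [Matrix.adjugate_apply, det_four] at s01
  simp only [Matrix.updateRow_apply, Pi.single_apply] at s01
  norm_num [Matrix.mul_apply, Fin.sum_univ_four, J4, Matrix.vecMul, dotProduct,
    Matrix.vecHead, Matrix.vecTail, Function.comp, Matrix.cons_val_two, Matrix.cons_val_three,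
    show (0:Fin 4) ≠ 1 by decide, show (0:Fin 4) ≠ 2 by decide, show (0:Fin 4) ≠ 3 by decide,
    show (1:Fin 4) ≠ 0 by decide, show (1:Fin 4) ≠ 2 by decide, show (1:Fin 4) ≠ 3 by decide,
    show (2:Fin 4) ≠ 0 by decide, show (2:Fin 4) ≠ 1 by decide, show (2:Fin 4) ≠ 3 by decide,
    show (3:Fin 4) ≠ 0 by decide, show (3:Fin 4) ≠ 1 by decide, show (3:Fin 4) ≠ 2 by decide] at s01
  have s02 := congrFun (congrFun hadj 0) 2
  rw [Matrix.adjugate_apply, det_four] at s02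
  simp only [Matrix.updateRow_apply, Pi.single_apply] at s02
  norm_num [Matrix.mul_apply, Fin.sum_univ_four, J4, Matrix.vecMul, dotProduct,
    Matrix.vecHead, Matrix.vecTail, Function.comp, Matrix.cons_val_two, Matrix.cons_val_three,
    show (0:Fin 4) ≠ 1 by decide, show (0:Fin 4) ≠ 2 by decide, show (0:Fin 4) ≠ 3 by decide,
    show (1:Fin 4) ≠ 0 by decide, show (1:Fin 4) ≠ 2 by decide, show (1:Fin 4) ≠ 3 by decide,
    show (2:Fin 4) ≠ 0 by decide, show (2:Fin 4) ≠ 1 by decide, show (2:Fin 4) ≠ 3 by decide,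
    show (3:Fin 4) ≠ 0 by decide, show (3:Fin 4) ≠ 1 by decide, show (3:Fin 4) ≠ 2 by decide] at s02
  have s03 := congrFun (congrFun hadj 0) 3
  rw [Matrix.adjugate_apply, det_four] at s03
  simp only [Matrix.updateRow_apply, Pi.single_apply] at s03
  norm_num [Matrix.mul_apply, Fin.sum_univ_four, J4, Matrix.vecMul, dotProduct,
    Matrix.vecHead, Matrix.vecTail, Function.comp, Matrix.cons_val_two, Matrix.cons_val_three,
    show (0:Fin 4) ≠ 1 by decide, show (0:Fin 4) ≠ 2 by decide, show (0:Fin 4) ≠ 3 by decide,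
    show (1:Fin 4) ≠ 0 by decide, show (1:Fin 4) ≠ 2 by decide, show (1:Fin 4) ≠ 3 by decide,
    show (2:Fin 4) ≠ 0 by decide, show (2:Fin 4) ≠ 1 by decide, show (2:Fin 4) ≠ 3 by decide,
    show (3:Fin 4) ≠ 0 by decide, show (3:Fin 4) ≠ 1 by decide, show (3:Fin 4) ≠ 2 by decide] at s03
  have s20 := congrFun (congrFun hadj 2) 0
  rw [Matrix.adjugate_apply, det_four] at s20
  simp only [Matrix.updateRow_apply, Pi.single_apply] at s20
  norm_num [Matrix.mul_apply, Fin.sum_univ_four, J4, Matrix.vecMul, dotProduct,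
    Matrix.vecHead, Matrix.vecTail, Function.comp, Matrix.cons_val_two, Matrix.cons_val_three,
    show (0:Fin 4) ≠ 1 by decide, show (0:Fin 4) ≠ 2 by decide, show (0:Fin 4) ≠ 3 by decide,
    show (1:Fin 4) ≠ 0 by decide, show (1:Fin 4) ≠ 2 by decide, show (1:Fin 4) ≠ 3 by decide,
    show (2:Fin 4) ≠ 0 by decide, show (2:Fin 4) ≠ 1 by decide, show (2:Fin 4) ≠ 3 by decide,
    show (3:Fin 4) ≠ 0 by decide, show (3:Fin 4) ≠ 1 by decide, show (3:Fin 4) ≠ 2 by decide] at s20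
  have s21 := congrFun (congrFun hadj 2) 1
  rw [Matrix.adjugate_apply, det_four] at s21
  simp only [Matrix.updateRow_apply, Pi.single_apply] at s21
  norm_num [Matrix.mul_apply, Fin.sum_univ_four, J4, Matrix.vecMul, dotProduct,
    Matrix.vecHead, Matrix.vecTail, Function.comp, Matrix.cons_val_two, Matrix.cons_val_three,
    show (0:Fin 4) ≠ 1 by decide, show (0:Fin 4) ≠ 2 by decide, show (0:Fin 4) ≠ 3 by decide,
    show (1:Fin 4) ≠ 0 by decide, show (1:Fin 4) ≠ 2 by decide, show (1:Fin 4) ≠ 3 by decide,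
    show (2:Fin 4) ≠ 0 by decide, show (2:Fin 4) ≠ 1 by decide, show (2:Fin 4) ≠ 3 by decide,
    show (3:Fin 4) ≠ 0 by decide, show (3:Fin 4) ≠ 1 by decide, show (3:Fin 4) ≠ 2 by decide] at s21
  have s22 := congrFun (congrFun hadj 2) 2
  rw [Matrix.adjugate_apply, det_four] at s22
  simp only [Matrix.updateRow_apply, Pi.single_apply] at s22
  norm_num [Matrix.mul_apply, Fin.sum_univ_four, J4, Matrix.vecMul, dotProduct,
    Matrix.vecHead, Matrix.vecTail, Function.comp, Matrix.cons_val_two, Matrix.cons_val_three,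
    show (0:Fin 4) ≠ 1 by decide, show (0:Fin 4) ≠ 2 by decide, show (0:Fin 4) ≠ 3 by decide,
    show (1:Fin 4) ≠ 0 by decide, show (1:Fin 4) ≠ 2 by decide, show (1:Fin 4) ≠ 3 by decide,
    show (2:Fin 4) ≠ 0 by decide, show (2:Fin 4) ≠ 1 by decide, show (2:Fin 4) ≠ 3 by decide,
    show (3:Fin 4) ≠ 0 by decide, show (3:Fin 4) ≠ 1 by decide, show (3:Fin 4) ≠ 2 by decide] at s22
  have s23 := congrFun (congrFun hadj 2) 3
  rw [Matrix.adjugate_apply, det_four] at s23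
  simp only [Matrix.updateRow_apply, Pi.single_apply] at s23
  norm_num [Matrix.mul_apply, Fin.sum_univ_four, J4, Matrix.vecMul, dotProduct,
    Matrix.vecHead, Matrix.vecTail, Function.comp, Matrix.cons_val_two, Matrix.cons_val_three,
    show (0:Fin 4) ≠ 1 by decide, show (0:Fin 4) ≠ 2 by decide, show (0:Fin 4) ≠ 3 by decide,
    show (1:Fin 4) ≠ 0 by decide, show (1:Fin 4) ≠ 2 by decide, show (1:Fin 4) ≠ 3 by decide,
    show (2:Fin 4) ≠ 0 by decide, show (2:Fin 4) ≠ 1 by decide, show (2:Fin 4) ≠ 3 by decide,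
    show (3:Fin 4) ≠ 0 by decide, show (3:Fin 4) ≠ 1 by decide, show (3:Fin 4) ≠ 2 by decide] at s23
  have hme : ∀ (i k : Fin 4), g.mulVec (e i) k = g k i := by
    intro i k
    simp [e, Matrix.mulVec_single]
  have key1 : wedge (g.mulVec (e 0)) (g.mulVec (e 1)) =
      (g 0 0 * g 1 1 - g 1 0 * g 0 1) • wedge (e 0) (e 1)
      + (g 0 0 * g 3 1 - g 3 0 * g 0 1) • (wedge (e 0) (e 3) - wedge (e 2) (e 1))
      + (g 2 0 * g 3 1 - g 3 0 * g 2 1) • wedge (e 2) (e 3) := by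
    rw [wedge_expand (g.mulVec (e 0)) (g.mulVec (e 1)), wedge_antisymm (e 2) (e 1)]
    simp only [hme]
    match_scalars
    · ring
    · linear_combination (1/2 : ℂ) * g 2 0 * s23 - (1/2 : ℂ) * g 0 0 * s21 + (1/2 : ℂ) * g 0 1 * g 2 0 * r03 - (1/2 : ℂ) * g 0 0 * g 2 1 * r03 + (1/2 : ℂ) * g 0 0 * g 2 3 * r01 + (1/2 : ℂ) * g 0 3 * g 2 1 * r00 - (1/2 : ℂ) * g 0 3 * g 2 0 * r01 - (1/2 : ℂ) * g 0 1 * g 2 3 * r00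
    · ring
    · linear_combination g 2 0 * s22 + g 0 0 * s20 - (1/2 : ℂ) * g 1 1 * g 2 3 * r00 + g 1 0 * g 2 3 * r01 + (1/2 : ℂ) * g 1 3 * g 2 1 * r00 - g 1 0 * g 2 1 * r03 - g 0 1 * g 3 0 * r03 + (1/2 : ℂ) * g 0 1 * g 3 3 * r00 + g 0 3 * g 3 0 * r01 - (1/2 : ℂ) * g 0 3 * g 3 1 * r00
    · linear_combination (1/2 : ℂ) * g 3 0 * s22 - (1/2 : ℂ) * g 1 0 * s20 + (1/2 : ℂ) * g 1 1 * g 3 0 * r03 - (1/2 : ℂ) * g 1 1 * g 3 3 * r00 + (1/2 : ℂ) * g 1 0 * g 3 3 * r01 - (1/2 : ℂ) * g 1 0 * g 3 1 * r03 - (1/2 : ℂ) * g 1 3 * g 3 0 * r01 + (1/2 : ℂ) * g 1 3 * g 3 1 * r00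
    · ring
  have key2 : wedge (g.mulVec (e 0)) (g.mulVec (e 3)) - wedge (g.mulVec (e 2)) (g.mulVec (e 1)) =
      (g 0 0 * g 1 3 - g 1 0 * g 0 3 - (g 0 2 * g 1 1 - g 1 2 * g 0 1)) • wedge (e 0) (e 1)
      + (g 0 0 * g 3 3 - g 3 0 * g 0 3 - (g 0 2 * g 3 1 - g 3 2 * g 0 1)) •
          (wedge (e 0) (e 3) - wedge (e 2) (e 1))
      + (g 2 0 * g 3 3 - g 3 0 * g 2 3 - (g 2 2 * g 3 1 - g 3 2 * g 2 1)) • wedge (e 2) (e 3) := by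
    rw [wedge_expand (g.mulVec (e 0)) (g.mulVec (e 3)),
      wedge_expand (g.mulVec (e 2)) (g.mulVec (e 1)), wedge_antisymm (e 2) (e 1)]
    simp only [hme]
    match_scalars
    · ring
    · linear_combination g 2 0 * s03 - g 0 0 * s01 + g 0 3 * g 2 2 * r01 - g 0 3 * g 2 1 * r02 - g 0 1 * g 2 2 * r03 + g 0 1 * g 2 3 * r02 - g 0 2 * g 2 3 * r01 + g 0 2 * g 2 1 * r03
    · ring
    · linear_combination - g 3 0 * s03 + g 0 0 * s00 + g 2 0 * s02 - g 1 0 * s01 + g 1 3 * g 2 2 * r01 - g 1 3 * g 2 1 * r02 - g 1 1 * g 2 2 * r03 - g 0 1 * g 3 3 * r02 + g 0 3 * g 3 1 * r02 + g 0 1 * g 3 2 * r03 - g 1 2 * g 2 3 * r01 + g 1 2 * g 2 1 * r03 + g 1 1 * g 2 3 * r02 - g 0 2 * g 3 1 * r03 - g 0 3 * g 3 2 * r01 + g 0 2 * g 3 3 * r01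
    · linear_combination g 3 0 * s02 - g 1 0 * s00 + g 1 2 * g 3 1 * r03 + g 1 1 * g 3 3 * r02 - g 1 3 * g 3 1 * r02 - g 1 1 * g 3 2 * r03 - g 1 2 * g 3 3 * r01 + g 1 3 * g 3 2 * r01
    · ring
  have key3 : wedge (g.mulVec (e 2)) (g.mulVec (e 3)) =
      (g 0 2 * g 1 3 - g 1 2 * g 0 3) • wedge (e 0) (e 1)
      + (g 0 2 * g 3 3 - g 3 2 * g 0 3) • (wedge (e 0) (e 3) - wedge (e 2) (e 1))
      + (g 2 2 * g 3 3 - g 3 2 * g 2 3) • wedge (e 2) (e 3) := by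
    rw [wedge_expand (g.mulVec (e 2)) (g.mulVec (e 3)), wedge_antisymm (e 2) (e 1)]
    simp only [hme]
    match_scalars
    · ring
    · linear_combination (1/2 : ℂ) * g 0 1 * g 2 3 * r22 - (1/2 : ℂ) * g 0 2 * s01 + (1/2 : ℂ) * g 2 2 * s03 - (1/2 : ℂ) * g 0 3 * g 2 1 * r22 - (1/2 : ℂ) * g 0 2 * g 2 3 * r12 + (1/2 : ℂ) * g 0 3 * g 2 2 * r12 + (1/2 : ℂ) * g 0 2 * g 2 1 * r23 - (1/2 : ℂ) * g 0 1 * g 2 2 * r23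
    · ring
    · linear_combination g 2 2 * s02 + g 0 2 * s00 + g 1 1 * g 2 3 * r22 + g 0 3 * g 3 1 * r22 - g 1 1 * g 2 2 * r23 - g 0 2 * g 3 1 * r23 - g 1 2 * g 2 2 * r13 + r23 + g 0 2 * g 3 3 * r12 + g 1 3 * g 2 2 * r12 - g 0 2 * g 3 2 * r13
    · linear_combination (1/2 : ℂ) * g 1 1 * g 3 3 * r22 - (1/2 : ℂ) * g 1 2 * s00 + (1/2 : ℂ) * g 1 2 * g 3 1 * r23 + (1/2 : ℂ) * g 3 2 * s02 - (1/2 : ℂ) * g 1 1 * g 3 2 * r23 - (1/2 : ℂ) * g 1 3 * g 3 1 * r22 - (1/2 : ℂ) * g 1 2 * g 3 3 * r12 + (1/2 : ℂ) * g 1 3 * g 3 2 * r12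
    · ring
  intro x hx
  unfold Vminus at hx
  induction hx using Submodule.span_induction with
  | mem y hy =>
    simp only [Set.mem_insert_iff, Set.mem_singleton_iff] at hy
    rcases hy with rfl | rfl | rfl
    · rw [hΛ, key1]; exact mem_Vminus_of_comb _ _ _
    · rw [map_sub, hΛ, hΛ, key2]; exact mem_Vminus_of_comb _ _ _
    · rw [hΛ, key3]; exact mem_Vminus_of_comb _ _ _
  | zero => rw [map_zero]; exact Submodule.zero_mem _
  | add y z _ _ hy hz => rw [map_add]; exact Submodule.add_mem _ hy hz
  | smul a y _ hy => rw [_root_.map_smul]; exact Submodule.smul_mem _ _ hy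

end
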